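/- Let G be a triangle-free graph with χ(G) > 3 and let I be any independent set of G. Then G \ I has more than 5 vertices; equivalently, the minimum of n − α(G) over triangle-free graphs G of order n with χ(G) > 3 is at least 6. -/

import Mathlib

open Set

variable {V : Type*}

/-- A directed cycle within a set `S` under arc relation `A`. -/
def DiCycleIn (A : V → V → Prop) (S : Set V) : Prop :=
  ∃ (n : ℕ) (f : Fin (n + 1) → V), Function.Injective f ∧ (∀ i, f i ∈ S) ∧
    ∀ i, A (f i) (f (i + 1))

/-- `S` induces an acyclic subdigraph of the digraph with arc relation `A`. -/
def AcyclicSet (A : V → V → Prop) (S : Set V) : Prop := ¬ DiCycleIn A S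

/-- A `k`-dicolouring: every colour class is acyclic. -/
def Dicolourable (A : V → V → Prop) (k : ℕ) : Prop :=
  ∃ φ : V → Fin k, ∀ c, AcyclicSet A {v | φ v = c}

/-- Dichromatic number of a digraph. -/
noncomputable def dichrNum (A : V → V → Prop) : ℕ := sInf {k | Dicolourable A k}

/-- Chromatic number of a simple graph, as a natural number. -/
noncomputable def chrNum (G : SimpleGraph V) : ℕ := sInf {k | G.Colorable k}

/-- `A` is an orientation of the simple graph `G`. -/
def IsOrientation (G : SimpleGraph V) (A : V → V → Prop) : Prop :=
  (∀ u v, G.Adj u v ↔ A u v ∨ A v u) ∧ ∀ u v, A u v → ¬ A v u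

/-- The maximum dichromatic number over all orientations of `G`. -/
noncomputable def maxDichr (G : SimpleGraph V) : ℕ :=
  sSup {k | ∃ A : V → V → Prop, IsOrientation G A ∧ dichrNum A = k}

/-- The backedge graph of a digraph `A` with respect to a total order `L`. -/
def backedge (A : V → V → Prop) (L : LinearOrder V) : SimpleGraph V where
  Adj u v := (A v u ∧ L.lt u v) ∨ (A u v ∧ L.lt v u)
  symm := by constructor; intro u v h; tauto
  loopless := by
    constructor
    intro u h
    rcases h with ⟨_, h⟩ | ⟨_, h⟩ <;> exact @lt_irrefl V L.toPreorder u h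

/-- An oriented graph: no pair of opposite arcs (hence no loops). -/
def Oriented (A : V → V → Prop) : Prop := ∀ u v, A u v → ¬ A v u

/-- The underlying graph of the digraph `A` is triangle-free. -/
def TriangleFreeDi (A : V → V → Prop) : Prop :=
  ∀ a b c : V, (A a b ∨ A b a) → (A b c ∨ A c b) → (A a c ∨ A c a) → False

/-- A directed linear forest: in- and out-degrees at most one, and no directed cycle. -/
def IsDilinForest (B : V → V → Prop) : Prop :=
  (∀ u v w, B u v → B u w → v = w) ∧ (∀ u v w, B u w → B v w → u = v) ∧
    AcyclicSet B Set.univ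

/-- The number of arcs of a digraph. -/
noncomputable def arcCount (B : V → V → Prop) : ℕ := Set.ncard {p : V × V | B p.1 p.2}

/-- The maximum number of arcs of a directed linear forest subdigraph of `A`. -/
noncomputable def linArcs (A : V → V → Prop) : ℕ :=
  sSup {m | ∃ B : V → V → Prop, (∀ u v, B u v → A u v) ∧ IsDilinForest B ∧ arcCount B = m}

/-- Independence number of a simple graph. -/
noncomputable def indepNum (G : SimpleGraph V) : ℕ :=
  sSup {k | ∃ S : Set V, (∀ u ∈ S, ∀ v ∈ S, ¬ G.Adj u v) ∧ S.ncard = k}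

/-- The `n`-backward-blowup of a digraph `A`. -/
def backBlowup (A : V → V → Prop) (n : ℕ) : V × Fin n → V × Fin n → Prop :=
  fun p q => (A p.1 q.1 ∧ p.2 = q.2) ∨ (A q.1 p.1 ∧ p.2 ≠ q.2)

section MyAux

variable {V : Type*}

private lemma myTri {G : SimpleGraph V} (htf : G.CliqueFree 3) {a b c : V}
    (hab : G.Adj a b) (hac : G.Adj a c) (hbc : G.Adj b c) : False := by
  classical
  exact htf {a, b, c} (SimpleGraph.is3Clique_triple_iff.2 ⟨hab, hac, hbc⟩)

/-- If the vertex set is covered by two independent sets plus a set `R` of at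
most two vertices, a triangle-free graph is 3-colourable. -/
private lemma lemA [Fintype V] (G : SimpleGraph V) (htf : G.CliqueFree 3)
    (I A R : Set V) (hI : ∀ u ∈ I, ∀ v ∈ I, ¬ G.Adj u v)
    (hA : ∀ u ∈ A, ∀ v ∈ A, ¬ G.Adj u v)
    (hcov : ∀ v, v ∉ I → v ∉ R → v ∈ A)
    (hR : ∀ x ∈ R, ∀ y ∈ R, ∀ z ∈ R, x = y ∨ x = z ∨ y = z) :
    G.Colorable 3 := by
  classical
  obtain ⟨e⟩ : Nonempty (V ≃ Fin (Fintype.card V)) := ⟨Fintype.equivFin V⟩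
  let cr : V → Fin 3 := fun x =>
    if ∃ y, y ∈ R ∧ G.Adj x y ∧ (e y : ℕ) < (e x : ℕ) then 0 else 1
  let c : V → Fin 3 := fun v =>
    if v ∈ I then 2 else if v ∈ R then cr v else
      if ∃ x, x ∈ R ∧ G.Adj v x ∧ cr x = 0 then 1 else 0
  have hcr01 : ∀ x, cr x ≠ 2 := by
    intro x
    show (if ∃ y, y ∈ R ∧ G.Adj x y ∧ (e y : ℕ) < (e x : ℕ) then (0 : Fin 3) else 1) ≠ 2
    split <;> decide
  have hcI : ∀ v, v ∈ I → c v = 2 := fun v hv => if_pos hv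
  have hcR : ∀ v, v ∉ I → v ∈ R → c v = cr v := by
    intro v hvI hvR; show (if _ then _ else _) = _
    rw [if_neg hvI, if_pos hvR]
  have hcA : ∀ v, v ∉ I → v ∉ R →
      c v = if ∃ x, x ∈ R ∧ G.Adj v x ∧ cr x = 0 then 1 else 0 := by
    intro v hvI hvR; show (if _ then _ else _) = _
    rw [if_neg hvI, if_neg hvR]
  have hcnI : ∀ v, v ∉ I → c v ≠ 2 := by
    intro v hv
    by_cases hvR : v ∈ R
    · rw [hcR v hv hvR]; exact hcr01 v
    · rw [hcA v hv hvR]; split <;> decide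
  -- R-R adjacent vertices get different colours
  have hRR : ∀ u v, u ∈ R → v ∈ R → G.Adj u v → cr u ≠ cr v := by
    intro u v hu hv huv
    show (if _ then _ else _) ≠ (if _ then _ else _)
    by_cases Pu : ∃ y, y ∈ R ∧ G.Adj u y ∧ (e y : ℕ) < (e u : ℕ)
    · by_cases Pv : ∃ y, y ∈ R ∧ G.Adj v y ∧ (e y : ℕ) < (e v : ℕ)
      · exfalso
        obtain ⟨y, hyR, hy1, hy2⟩ := Pu
        obtain ⟨z, hzR, hz1, hz2⟩ := Pv
        have hyv : y = v := by
          rcases hR u hu v hv y hyR with h | h | h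
          · exact absurd h huv.ne
          · exact absurd h hy1.ne
          · exact h.symm
        have hzu : z = u := by
          rcases hR v hv u hu z hzR with h | h | h
          · exact absurd h.symm huv.ne
          · exact absurd h hz1.ne
          · exact h.symm
        subst hyv; subst hzu; omega
      · rw [if_pos Pu, if_neg Pv]; decide
    · by_cases Pv : ∃ y, y ∈ R ∧ G.Adj v y ∧ (e y : ℕ) < (e v : ℕ)
      · rw [if_neg Pu, if_pos Pv]; decide
      · exfalso
        push_neg at Pu Pv
        have h1 : (e u : ℕ) ≤ (e v : ℕ) := Pu v hv huv
        have h2 : (e v : ℕ) ≤ (e u : ℕ) := Pv u hu huv.symm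
        exact huv.ne (e.injective (Fin.val_injective (le_antisymm h1 h2)))
  -- A-R adjacent vertices get different colours
  have hARc : ∀ a x, a ∉ I → a ∉ R → x ∈ R → G.Adj a x →
      (if ∃ x', x' ∈ R ∧ G.Adj a x' ∧ cr x' = 0 then (1 : Fin 3) else 0) ≠ cr x := by
    intro a x haI haR hxR hax
    by_cases hx0 : cr x = 0
    · rw [if_pos ⟨x, hxR, hax, hx0⟩, hx0]; decide
    · have hx1 : cr x = 1 := by
        by_cases hP : ∃ y, y ∈ R ∧ G.Adj x y ∧ (e y : ℕ) < (e x : ℕ)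
        · exfalso
          apply hx0
          show (if ∃ y, y ∈ R ∧ G.Adj x y ∧ (e y : ℕ) < (e x : ℕ) then (0 : Fin 3) else 1) = 0
          exact if_pos hP
        · exact if_neg hP
      have hcond : ¬ ∃ x', x' ∈ R ∧ G.Adj a x' ∧ cr x' = 0 := by
        rintro ⟨x', hx'R, hax', hx'0⟩
        have hx'x : x' ≠ x := by
          intro h; rw [h, hx1] at hx'0; exact absurd hx'0 (by decide)
        have hx'cond : ∃ y, y ∈ R ∧ G.Adj x' y ∧ (e y : ℕ) < (e x' : ℕ) := by
          by_contra hno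
          have : cr x' = 1 := if_neg hno
          rw [this] at hx'0; exact absurd hx'0 (by decide)
        obtain ⟨y, hyR, hy1, hy2⟩ := hx'cond
        by_cases hyx : y = x
        · subst hyx; exact myTri htf hax' hax hy1
        · rcases hR x' hx'R y hyR x hxR with h | h | h
          · exact hy1.ne h
          · exact hx'x h
          · exact hyx h
      rw [hx1, if_neg hcond]; decide
  refine ⟨SimpleGraph.Coloring.mk c ?_⟩
  intro u v huv
  by_cases huI : u ∈ I <;> by_cases hvI : v ∈ I
  · exact absurd huv (hI u huI v hvI)
  · rw [hcI u huI]; exact fun h => hcnI v hvI h.symm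
  · rw [hcI v hvI]; exact hcnI u huI
  · by_cases huR : u ∈ R <;> by_cases hvR : v ∈ R
    · rw [hcR u huI huR, hcR v hvI hvR]; exact hRR u v huR hvR huv
    · rw [hcR u huI huR, hcA v hvI hvR]
      exact fun h => hARc v u hvI hvR huR huv.symm h.symm
    · rw [hcA u huI huR, hcR v hvI hvR]
      exact hARc u v huI huR hvR huv
    · exact absurd huv (hA u (hcov u huI huR) v (hcov v hvI hvR))

open Classical in
private noncomputable def pickC (G : SimpleGraph V) (key : V → ℕ)
    (t : ℕ → Fin 3) (k : ℕ) : Fin 3 :=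
  if h2 : ∃ col : Fin 3, ∀ v u, key v = k → G.Adj v u → key u < k → t (key u) ≠ col
  then h2.choose else 0

private noncomputable def myTable (G : SimpleGraph V) (key : V → ℕ) : ℕ → ℕ → Fin 3
  | 0 => fun _ => 0
  | (k+1) => fun j => if j = k then pickC G key (myTable G key k) k else myTable G key k j

private lemma myTable_stable (G : SimpleGraph V) (key : V → ℕ) :
    ∀ m j, j < m → myTable G key m j = myTable G key (j + 1) j := by
  intro m
  induction m with
  | zero => intro j hj; omega
  | succ m ih =>
    intro j hj
    rcases Nat.lt_succ_iff_lt_or_eq.mp hj with h | h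
    · show (if j = m then _ else myTable G key m j) = _
      rw [if_neg (Nat.ne_of_lt h), ih j h]
    · subst h; rfl

/-- Greedy colouring: if every vertex has at most two earlier neighbours, the
graph is 3-colourable. -/
private lemma lemB [Fintype V] (G : SimpleGraph V) (key : V → ℕ)
    (hinj : Function.Injective key)
    (hdeg : ∀ v, ({u | G.Adj v u ∧ key u < key v}).ncard ≤ 2) : G.Colorable 3 := by
  classical
  let c : V → Fin 3 := fun v => myTable G key (key v + 1) (key v)
  have hstep : ∀ v, c v = pickC G key (myTable G key (key v)) (key v) := by
    intro v
    show (if key v = key v then _ else _) = _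
    rw [if_pos rfl]
  have hmain : ∀ u v, G.Adj u v → key u < key v → c u ≠ c v := by
    intro u v huv hlt
    have hex : ∃ col : Fin 3, ∀ w u', key w = key v → G.Adj w u' → key u' < key v →
        myTable G key (key v) (key u') ≠ col := by
      have hS : ({u' | G.Adj v u' ∧ key u' < key v}).ncard ≤ 2 := hdeg v
      set T := (fun u' => myTable G key (key v) (key u')) ''
        {u' | G.Adj v u' ∧ key u' < key v} with hT
      have hTcard : T.ncard ≤ 2 :=
        le_trans (Set.ncard_image_le (Set.toFinite _)) hS
      have hTne : T ≠ Set.univ := by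
        intro hTu
        rw [hTu, Set.ncard_univ] at hTcard
        simp at hTcard
      obtain ⟨col, hcol⟩ : ∃ col : Fin 3, col ∉ T := by
        by_contra hno; push_neg at hno; exact hTne (Set.eq_univ_of_forall hno)
      refine ⟨col, ?_⟩
      intro w u' hw hadj hlt' heq
      have hwv : w = v := hinj hw
      rw [hwv] at hadj
      exact hcol (heq ▸ Set.mem_image_of_mem _
        (show u' ∈ {u' | G.Adj v u' ∧ key u' < key v} from ⟨hadj, hlt'⟩))
    have hprop : ∀ u', G.Adj v u' → key u' < key v →
        myTable G key (key v) (key u') ≠ c v := by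
      rw [hstep v]
      unfold pickC
      rw [dif_pos hex]
      intro u' h1 h2
      exact hex.choose_spec v u' rfl h1 h2
    have h := hprop u huv.symm hlt
    rwa [myTable_stable G key (key v) (key u) hlt] at h
  refine ⟨SimpleGraph.Coloring.mk c ?_⟩
  intro u v huv
  rcases lt_trichotomy (key u) (key v) with h | h | h
  · exact hmain u v huv h
  · exact absurd (hinj h) huv.ne
  · exact fun hc => (hmain v u huv.symm h) hc.symm

end MyAux

/-- If `G` is triangle-free with `χ(G) > 3`, then removing any independent set
leaves more than 5 vertices. -/
theorem stmt_19 [Fintype V] (G : SimpleGraph V) (htf : G.CliqueFree 3)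
    (hchi : ¬ G.Colorable 3) (I : Set V) (hI : ∀ u ∈ I, ∀ v ∈ I, ¬ G.Adj u v) :
    5 < (Iᶜ : Set V).ncard := by
  classical
  by_contra hcon
  push_neg at hcon
  -- Step 1: every independent subset of Iᶜ has at most 2 elements
  have step1 : ∀ S : Set V, S ⊆ Iᶜ → (∀ u ∈ S, ∀ v ∈ S, ¬ G.Adj u v) →
      S.ncard ≤ 2 := by
    intro S hsub hind
    by_contra h3
    push_neg at h3
    have hScard : S.ncard ≤ Iᶜ.ncard := Set.ncard_le_ncard hsub (Set.toFinite _)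
    have hRcard : (Iᶜ \ S).ncard ≤ 2 := by
      rw [Set.ncard_diff hsub (Set.toFinite _)]
      omega
    apply hchi
    apply lemA G htf I S (Iᶜ \ S) hI hind
    · intro v hvI hvR
      by_contra hvS
      exact hvR ⟨hvI, hvS⟩
    · intro x hx y hy z hz
      by_contra hne
      push_neg at hne
      obtain ⟨hxy, hxz, hyz⟩ := hne
      have hsub3 : ({x, y, z} : Set V) ⊆ Iᶜ \ S := by
        intro a ha
        rcases ha with h | h | h
        · exact h ▸ hx
        · exact h ▸ hy
        · exact h ▸ hz
      have h33 : ({x, y, z} : Set V).ncard = 3 := by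
        rw [Set.ncard_insert_of_notMem (by simp [hxy, hxz]) (Set.toFinite _),
          Set.ncard_pair hyz]
      have := Set.ncard_le_ncard hsub3 (Set.toFinite _)
      omega
  -- Step 2: greedy colouring, Iᶜ first, then I
  set n := Fintype.card V with hn
  obtain ⟨e⟩ : Nonempty (V ≃ Fin n) := ⟨Fintype.equivFin V⟩
  set key : V → ℕ := fun v => if v ∈ I then n + (e v : ℕ) else (e v : ℕ) with hkey
  have hkeyI : ∀ v ∈ I, key v = n + (e v : ℕ) := fun v hv => if_pos hv
  have hkeynI : ∀ v, v ∉ I → key v = (e v : ℕ) := fun v hv => if_neg hv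
  have hinj : Function.Injective key := by
    intro u v h
    by_cases hu : u ∈ I <;> by_cases hv : v ∈ I
    · rw [hkeyI u hu, hkeyI v hv] at h
      exact e.injective (Fin.val_injective (by omega))
    · rw [hkeyI u hu, hkeynI v hv] at h
      have := (e v).isLt
      omega
    · rw [hkeynI u hu, hkeyI v hv] at h
      have := (e u).isLt
      omega
    · rw [hkeynI u hu, hkeynI v hv] at h
      exact e.injective (Fin.val_injective h)
  apply hchi
  apply lemB G key hinj
  intro v
  apply step1
  · intro u hu
    obtain ⟨hadj, hlt⟩ := hu
    simp only [Set.mem_compl_iff]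
    by_cases hvI : v ∈ I
    · intro huI; exact hI v hvI u huI hadj
    · intro huI
      rw [hkeynI v hvI, hkeyI u huI] at hlt
      have := (e v).isLt
      omega
  · intro a ha b hb hab
    exact myTri htf ha.1 hb.1 hab
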